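/- arXiv:1111.5579 — 2 statements merged into one kernel-verified Lean document; each statement's English description precedes it below -/
import Mathlib

section
/- Let $A$ be an invertible $(n-1) \times (n-1)$ real matrix with $\det(I - A) \neq 0$, and let $P = \begin{pmatrix} A & B \\ 0 & (A^t)^{-1} \end{pmatrix}$. Then $\operatorname{sign}\det(I - P) = (-1)^{n-1} \operatorname{sign}(\det A)$. In particular $(-1)^{n-1}\operatorname{sign}\det(I-P) > 0$ if and only if $\det A > 0$. -/
open Matrix

/-- For `P = [[A, B], [0, (Aᵀ)⁻¹]]` with `A` invertible and `1` not an eigenvalue of `A`,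
`sign det(I - P) = (-1)^(n-1) sign(det A)`; in particular
`(-1)^(n-1) sign det(I - P) > 0 ↔ det A > 0`. -/
theorem sign_det_one_sub_blockTriangular (n : ℕ)
    (A B : Matrix (Fin (n - 1)) (Fin (n - 1)) ℝ) (hA : IsUnit A)
    (h1 : (1 - A).det ≠ 0)
    (P : Matrix (Fin (n - 1) ⊕ Fin (n - 1)) (Fin (n - 1) ⊕ Fin (n - 1)) ℝ)
    (hP : P = Matrix.fromBlocks A B 0 (Aᵀ)⁻¹) :
    Real.sign ((1 - P).det) = (-1) ^ (n - 1) * Real.sign A.det ∧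
      ((-1) ^ (n - 1) * Real.sign ((1 - P).det) > 0 ↔ A.det > 0) := by
  have hd : IsUnit A.det := (Matrix.isUnit_iff_isUnit_det A).mp hA
  have hd0 : A.det ≠ 0 := by
    intro h; rw [h] at hd; exact (not_isUnit_zero) hd
  have hdT : IsUnit (Aᵀ).det := by rwa [Matrix.det_transpose]
  -- 1 - P as block matrix
  have hblock : (1 : Matrix (Fin (n - 1) ⊕ Fin (n - 1)) (Fin (n - 1) ⊕ Fin (n - 1)) ℝ) - P
      = Matrix.fromBlocks (1 - A) (-B) 0 (1 - (Aᵀ)⁻¹) := by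
    rw [hP, ← Matrix.fromBlocks_one]
    ext (i | i) (j | j) <;>
      simp [Matrix.fromBlocks, Matrix.sub_apply]
  have hfactor : (1 : Matrix (Fin (n - 1)) (Fin (n - 1)) ℝ) - (Aᵀ)⁻¹
      = (Aᵀ)⁻¹ * (Aᵀ - 1) := by
    rw [Matrix.mul_sub, Matrix.nonsing_inv_mul _ hdT, Matrix.mul_one]
  have hdetA1 : (Aᵀ - 1).det = (-1 : ℝ) ^ (n - 1) * (1 - A).det := by
    have : Aᵀ - 1 = (-(1 - A))ᵀ := by
      rw [Matrix.transpose_neg, Matrix.transpose_sub, Matrix.transpose_one, neg_sub]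
    rw [this, Matrix.det_transpose, Matrix.det_neg]
    simp
  have hdet : (1 - P).det = (-1 : ℝ) ^ (n - 1) * ((1 - A).det ^ 2 * (A.det)⁻¹) := by
    rw [hblock, Matrix.det_fromBlocks_zero₂₁, hfactor, Matrix.det_mul,
      Matrix.det_nonsing_inv, hdetA1, Matrix.det_transpose]
    simp [Ring.inverse_eq_inv']
    ring
  have hc2 : 0 < (1 - A).det ^ 2 := by positivity
  have hsign : Real.sign ((1 - P).det) = (-1) ^ (n - 1) * Real.sign A.det := by
    rcases hd0.lt_or_gt with hneg | hpos
    · have hx : (1 - A).det ^ 2 * (A.det)⁻¹ < 0 :=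
        mul_neg_of_pos_of_neg hc2 (inv_lt_zero.mpr hneg)
      rw [Real.sign_of_neg hneg]
      rcases Nat.even_or_odd (n - 1) with he | ho
      · rw [he.neg_one_pow] at hdet ⊢
        rw [hdet, one_mul, one_mul, Real.sign_of_neg hx]
      · rw [ho.neg_one_pow] at hdet ⊢
        rw [hdet]
        have : -1 * ((1 - A).det ^ 2 * (A.det)⁻¹) > 0 := by nlinarith
        rw [Real.sign_of_pos this]; ring
    · have hx : 0 < (1 - A).det ^ 2 * (A.det)⁻¹ :=
        mul_pos hc2 (inv_pos.mpr hpos)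
      rw [Real.sign_of_pos hpos]
      rcases Nat.even_or_odd (n - 1) with he | ho
      · rw [he.neg_one_pow] at hdet ⊢
        rw [hdet, one_mul, one_mul, Real.sign_of_pos hx]
      · rw [ho.neg_one_pow] at hdet ⊢
        rw [hdet]
        have : -1 * ((1 - A).det ^ 2 * (A.det)⁻¹) < 0 := by nlinarith
        rw [Real.sign_of_neg this]; ring
  refine ⟨hsign, ?_⟩
  rw [hsign, ← mul_assoc, ← pow_add]
  rw [Even.neg_one_pow ⟨n - 1, rfl⟩, one_mul]
  constructor
  · intro h
    rcases hd0.lt_or_gt with hneg | hpos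
    · rw [Real.sign_of_neg hneg] at h; linarith
    · exact hpos
  · intro h
    rw [Real.sign_of_pos h]; norm_num
end

section
/- Let $P$ be a symplectic $2m \times 2m$ real matrix preserving the Lagrangian subspace $L_0 = \mathbb{R}^m \times \{0\}$, and suppose $1$ is not an eigenvalue of $P$. Then $1$ is not an eigenvalue of the restriction $P|_{L_0}$, and $(-1)^m \operatorname{sign}\det(I - P) = \operatorname{sign}\det(P|_{L_0})$. -/
open Matrix

lemma sign_aux (a p q e : ℝ) (he : e = 1 ∨ e = -1) (hq : q ≠ 0) (hp : p ≠ 0)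
    (h : a * p = e * q ^ 2) : e * Real.sign p = Real.sign a := by
  have hq2 : 0 < q ^ 2 := by positivity
  rcases hp.lt_or_gt with hp' | hp' <;> rcases he with he | he <;> subst he
  · have ha : a < 0 := by nlinarith
    rw [Real.sign_of_neg hp', Real.sign_of_neg ha]; ring
  · have ha : 0 < a := by nlinarith
    rw [Real.sign_of_neg hp', Real.sign_of_pos ha]; ring
  · have ha : 0 < a := by nlinarith
    rw [Real.sign_of_pos hp', Real.sign_of_pos ha]; ring
  · have ha : a < 0 := by nlinarith
    rw [Real.sign_of_pos hp', Real.sign_of_neg ha]; ring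

/-- Let `P` be a symplectic `2m × 2m` matrix preserving the Lagrangian subspace
`L₀ = ℝ^m × {0}` (encoded by the vanishing of the lower-left block, so that the
restriction `P|_{L₀}` is the upper-left block `P.toBlocks₁₁`). If `1` is not an
eigenvalue of `P`, then `1` is not an eigenvalue of `P|_{L₀}` and
`(-1)^m sign det(I - P) = sign det(P|_{L₀})`. -/
theorem sign_det_one_sub_symplectic_lagrangian (m : ℕ)
    (P : Matrix (Fin m ⊕ Fin m) (Fin m ⊕ Fin m) ℝ)
    (J : Matrix (Fin m ⊕ Fin m) (Fin m ⊕ Fin m) ℝ)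
    (hJ : J = Matrix.fromBlocks 0 1 (-1) 0)
    (hsymp : Pᵀ * J * P = J)
    (hL : ∀ i j, P (Sum.inr i) (Sum.inl j) = 0)
    (h1 : (1 - P).det ≠ 0) :
    (1 - P.toBlocks₁₁).det ≠ 0 ∧
      (-1) ^ m * Real.sign ((1 - P).det) = Real.sign (P.toBlocks₁₁).det := by
  set A := P.toBlocks₁₁ with hA
  set B := P.toBlocks₁₂ with hB
  set D := P.toBlocks₂₂ with hD
  have hP : P = Matrix.fromBlocks A B 0 D := by
    ext (i | i) (j | j) <;>
      simp [hA, hB, hD, Matrix.toBlocks₁₁, Matrix.toBlocks₁₂, Matrix.toBlocks₂₂,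
        Matrix.fromBlocks, hL]
  rw [hP, hJ, Matrix.fromBlocks_transpose, Matrix.fromBlocks_multiply,
    Matrix.fromBlocks_multiply] at hsymp
  have h12 : Aᵀ * D = 1 := by
    have := congrArg Matrix.toBlocks₁₂ hsymp
    simpa using this
  have hdetAD : A.det * D.det = 1 := by
    have := congrArg Matrix.det h12
    simpa [Matrix.det_mul, Matrix.det_transpose] using this
  have hAne : A.det ≠ 0 := by
    intro h
    rw [h, zero_mul] at hdetAD
    exact zero_ne_one hdetAD
  have hkey : A.det * (1 - D).det = (-1 : ℝ) ^ m * (1 - A).det := by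
    have h : Aᵀ * (1 - D) = -((1 - A)ᵀ) := by
      rw [Matrix.mul_sub, h12, mul_one, Matrix.transpose_sub, Matrix.transpose_one]
      abel
    have := congrArg Matrix.det h
    rw [Matrix.det_mul, Matrix.det_transpose, Matrix.det_neg, Matrix.det_transpose] at this
    simpa using this
  have hdetP : (1 - P).det = (1 - A).det * (1 - D).det := by
    have : (1 : Matrix (Fin m ⊕ Fin m) (Fin m ⊕ Fin m) ℝ) - P =
        Matrix.fromBlocks (1 - A) (-B) 0 (1 - D) := by
      rw [hP, ← Matrix.fromBlocks_one, sub_eq_add_neg, Matrix.fromBlocks_neg,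
        Matrix.fromBlocks_add]
      congr 1 <;> simp [sub_eq_add_neg]
    rw [this, Matrix.det_fromBlocks_zero₂₁]
  have hqne : (1 - A).det ≠ 0 := by
    intro h
    rw [hdetP, h, zero_mul] at h1
    exact h1 rfl
  refine ⟨hqne, ?_⟩
  apply sign_aux _ _ ((1 - A).det) _ _ hqne h1
  · rw [hdetP]
    linear_combination (1 - A).det * hkey
  · rcases Nat.even_or_odd m with h | h
    · left; exact h.neg_one_pow
    · right; exact h.neg_one_pow
end
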